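/- If two distinct nodes i, j of a simple graph satisfy A_{ij} = 1 and every neighbor of the lower-degree node other than j is also a neighbor of the other node, then TOM_{ij} = 1. -/

import Mathlib

open Finset

/-- Maximal topological overlap: if two distinct nodes `i ≠ j` are adjacent
(`A i j = 1`), node `i` has the lower degree (`C i ≤ C j`), and every neighbor
of `i` other than `j` is also a neighbor of `j`, then `TOM i j = 1`. -/
theorem TOM_eq_one_of_shared_neighbors
    (d : ℕ) (A : Fin d → Fin d → ℝ)
    (hA01 : ∀ i j, A i j = 0 ∨ A i j = 1)
    (hsymm : ∀ i j, A i j = A j i)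
    (hdiag : ∀ i, A i i = 0)
    (i j : Fin d) (hij : i ≠ j) (hadj : A i j = 1)
    (hdeg : (∑ u, A i u) ≤ (∑ u, A j u))
    (hshared : ∀ u, u ≠ j → A i u = 1 → A j u = 1) :
    let C : Fin d → ℝ := fun k => ∑ u, A k u
    let e : ℝ := ∑ u, A i u * A u j
    (e + A i j) / (min (C i) (C j) + 1 - A i j) = 1 := by
  intro C e
  have hterm : ∀ u : Fin d, A i u * A u j = if u = j then 0 else A i u := by
    intro u
    by_cases hu : u = j
    · simp [hu, hdiag]
    · simp only [if_neg hu]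
      rcases hA01 i u with h0 | h1
      · simp [h0]
      · have := hshared u hu h1
        rw [h1, ← hsymm, this, one_mul]
  have he : e = C i - 1 := by
    have : e = ∑ u, (if u = j then 0 else A i u) := by
      simp only [e]
      exact Finset.sum_congr rfl fun u _ => hterm u
    rw [this]
    have : (∑ u, (if u = j then (0:ℝ) else A i u))
        = (∑ u, A i u) - A i j := by
      rw [eq_sub_iff_add_eq,
        ← Finset.sum_erase_add Finset.univ (fun u => A i u) (Finset.mem_univ j),
        ← Finset.sum_erase_add Finset.univ
          (fun u => if u = j then (0:ℝ) else A i u) (Finset.mem_univ j)]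
      rw [if_pos rfl, add_zero]
      exact congrArg (· + A i j)
        (Finset.sum_congr rfl fun u hu => if_neg (Finset.ne_of_mem_erase hu))
    rw [this, hadj]
  have hmin : min (C i) (C j) = C i := min_eq_left hdeg
  have hpos : (0:ℝ) < C i := by
    have : (1:ℝ) ≤ C i := by
      calc (1:ℝ) = A i j := hadj.symm
        _ ≤ ∑ u, A i u := by
            apply Finset.single_le_sum (f := fun u => A i u)
            · intro u _
              rcases hA01 i u with h | h <;> simp [h]
            · exact Finset.mem_univ j
    linarith
  rw [hmin, hadj, he]
  rw [sub_add_cancel, add_sub_cancel_right]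
  exact div_self hpos.ne'
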